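/- arXiv:2305.04357 — 5 statements merged into one kernel-verified Lean document; each statement's English description precedes it below -/
import Mathlib

section
/- The Jensen–Shannon distance is a metric on the set of probability vectors on a finite nonempty type X: for all probability vectors p, q, r on X, (i) D_JSD(p,q) ≥ 0, (ii) D_JSD(p,q) = 0 if and only if p = q, (iii) D_JSD(p,q) = D_JSD(q,p), and (iv) D_JSD(p,q) ≤ D_JSD(p,r) + D_JSD(r,q). -/
open Finset Matrix

noncomputable section

/-- A probability vector on a finite type: nonnegative entries summing to 1. -/
def IsProbVec {X : Type*} [Fintype X] (p : X → ℝ) : Prop :=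
  (∀ x, 0 ≤ p x) ∧ ∑ x, p x = 1

/-- Kullback–Leibler divergence, with the convention that terms with `p x = 0`
contribute `0`. -/
noncomputable def KL {X : Type*} [Fintype X] (p q : X → ℝ) : ℝ :=
  ∑ x, if p x = 0 then 0 else p x * Real.log (p x / q x)

/-- Jensen–Shannon distance. -/
noncomputable def JSD {X : Type*} [Fintype X] (p q : X → ℝ) : ℝ :=
  Real.sqrt ((1 / 2) * KL p (fun x => (p x + q x) / 2)
    + (1 / 2) * KL q (fun x => (p x + q x) / 2))

/-- A column-stochastic matrix: nonnegative entries, every column sums to 1. -/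
def IsColStoch {Y X : Type*} [Fintype Y] [Fintype X] (M : Matrix Y X ℝ) : Prop :=
  (∀ y x, 0 ≤ M y x) ∧ ∀ x, ∑ y, M y x = 1

/-- The sup-JSD distance between two matrices of the same shape:
the maximum over columns of the JSD between corresponding columns. -/
noncomputable def supJSD {Y X : Type*} [Fintype Y] [Fintype X] [Nonempty X]
    (M N : Matrix Y X ℝ) : ℝ :=
  Finset.univ.sup' Finset.univ_nonempty fun x => JSD (fun y => M y x) (fun y => N y x)

/-- An abstraction matrix: entries in {0,1}, every column contains exactly one 1,
and every row contains at least one 1. -/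
def IsAbsMatrix {N M : Type*} [Fintype N] [Fintype M] (α : Matrix N M ℝ) : Prop :=
  (∀ j i, α j i = 0 ∨ α j i = 1) ∧ (∀ i, ∃! j, α j i = 1) ∧ (∀ j, ∃ i, α j i = 1)

/-- The pseudo-inverse `α⁺ = αᵀ·(α·αᵀ)⁻¹` of an abstraction matrix. -/
noncomputable def pinv {N M : Type*} [Fintype N] [Fintype M] [DecidableEq N]
    (α : Matrix N M ℝ) : Matrix M N ℝ :=
  αᵀ * (α * αᵀ)⁻¹

/-!
`JSD p q ^ 2 = ∑ x, L (p x) (q x)`, where `L a b` (`jsDiv a b`) is the Jensen gap of the concave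
function `t ↦ -t log t` at `a` and `b`; by Minkowski's inequality it therefore suffices that `√L`
is a metric on `[0, ∞)` (Endres–Schindelin). For `a ≤ c ≤ b` the triangle inequality comes from
`y ↦ √L(a, y) - √L(c, y)` being antitone on `[c, ∞)`. Since `∂L(x, y)/∂y = ½ log (2y / (x + y))`,
comparing derivatives reduces this to `x ↦ L(x, y) / log² (2y / (x + y))` being antitone on
`[0, y)`, which after scaling is the one-variable inequality
`u log u + (2 - u) log (2 - u) + log u · log (2 - u) ≤ 0` for `0 < u ≤ 1`.
-/

open Real Set

def jsDiv (a b : ℝ) : ℝ := negMulLog ((a + b) / 2) - (negMulLog a + negMulLog b) / 2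

lemma jsDiv_comm (a b : ℝ) : jsDiv a b = jsDiv b a := by
  rw [jsDiv, jsDiv, add_comm a, add_comm (negMulLog a)]

lemma jsDiv_self (a : ℝ) : jsDiv a a = 0 := by
  rw [jsDiv, add_self_div_two, add_self_div_two, sub_self]

lemma jsDiv_eq (a b : ℝ) :
    jsDiv a b = (a * (log a - log ((a + b) / 2)) + b * (log b - log ((a + b) / 2))) / 2 := by
  simp only [jsDiv, negMulLog]
  ring

lemma jsDiv_pos {a b : ℝ} (ha : 0 ≤ a) (hb : 0 ≤ b) (hab : a ≠ b) : 0 < jsDiv a b := by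
  have h := strictConcaveOn_negMulLog.2 ha hb hab (by norm_num : (0 : ℝ) < 1 / 2)
    (by norm_num : (0 : ℝ) < 1 / 2) (by norm_num)
  simp only [smul_eq_mul] at h
  rw [jsDiv, show (a + b) / 2 = 1 / 2 * a + 1 / 2 * b by ring]
  linarith

lemma jsDiv_nonneg {a b : ℝ} (ha : 0 ≤ a) (hb : 0 ≤ b) : 0 ≤ jsDiv a b := by
  rcases eq_or_ne a b with rfl | hab
  · rw [jsDiv_self]
  · exact (jsDiv_pos ha hb hab).le

lemma jsDiv_eq_zero_iff {a b : ℝ} (ha : 0 ≤ a) (hb : 0 ≤ b) : jsDiv a b = 0 ↔ a = b :=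
  ⟨fun h => by_contra fun hab => (jsDiv_pos ha hb hab).ne' h, fun h => h ▸ jsDiv_self a⟩

lemma continuous_jsDiv (a : ℝ) : Continuous (jsDiv a) := by
  unfold jsDiv
  fun_prop

lemma hasDerivAt_jsDiv {a y : ℝ} (hy : y ≠ 0) (hay : a + y ≠ 0) :
    HasDerivAt (jsDiv a) ((log y - log ((a + y) / 2)) / 2) y := by
  have hmid : HasDerivAt (fun y => (a + y) / 2) (1 / 2) y :=
    ((hasDerivAt_id' y).const_add a).div_const 2
  refine (((hasDerivAt_negMulLog (div_ne_zero hay two_ne_zero)).comp y hmid).sub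
    (((hasDerivAt_negMulLog hy).const_add (negMulLog a)).div_const 2)).congr_deriv ?_
  ring

lemma hasDerivAt_jsDiv_left {x b : ℝ} (hx : x ≠ 0) (hxb : x + b ≠ 0) :
    HasDerivAt (fun x => jsDiv x b) ((log x - log ((x + b) / 2)) / 2) x := by
  simp only [jsDiv_comm _ b]
  rw [add_comm x b] at hxb ⊢
  exact hasDerivAt_jsDiv hx hxb

lemma jsDiv_monotoneOn {a : ℝ} (ha : 0 ≤ a) : MonotoneOn (jsDiv a) (Ici a) := by
  refine monotoneOn_of_hasDerivWithinAt_nonneg (f' := fun y => (log y - log ((a + y) / 2)) / 2)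
    (convex_Ici a) (continuous_jsDiv a).continuousOn (fun y hy => ?_) fun y hy => ?_
  all_goals rw [interior_Ici, Set.mem_Ioi] at hy
  · exact (hasDerivAt_jsDiv (by linarith) (by linarith)).hasDerivWithinAt
  · have : log ((a + y) / 2) ≤ log y := log_le_log (by linarith) (by linarith)
    linarith

lemma jsDiv_antitoneOn (a : ℝ) : AntitoneOn (jsDiv a) (Icc 0 a) := by
  refine antitoneOn_of_hasDerivWithinAt_nonpos (f' := fun y => (log y - log ((a + y) / 2)) / 2)
    (convex_Icc 0 a) (continuous_jsDiv a).continuousOn (fun y hy => ?_) fun y hy => ?_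
  all_goals rw [interior_Icc] at hy; obtain ⟨hy0, hya⟩ := hy
  · exact (hasDerivAt_jsDiv hy0.ne' (by linarith)).hasDerivWithinAt
  · have : log y ≤ log ((a + y) / 2) := log_le_log hy0 (by linarith)
    linarith

lemma log_mul_log_two_sub_le {u : ℝ} (hu0 : 0 < u) (hu1 : u ≤ 1) :
    log u * log (2 - u) ≤ -(u * log u + (2 - u) * log (2 - u)) := by
  let G : ℝ → ℝ := fun u => u * log u + (2 - u) * log (2 - u) + log u * log (2 - u)
  have hG : ∀ u, 0 < u → u < 2 → HasDerivAt G
      ((1 - u) / (u * (2 - u)) * (u * log u + (2 - u) * log (2 - u))) u := by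
    intro u h0 h2
    have h2' : 2 - u ≠ 0 := by linarith
    have hsub : HasDerivAt (fun u => 2 - u) (-1) u := by
      simpa using (hasDerivAt_id u).const_sub 2
    refine (((hasDerivAt_mul_log h0.ne').add ((hasDerivAt_mul_log h2').comp u hsub)).add
      ((hasDerivAt_log h0.ne').mul (hsub.log h2'))).congr_deriv ?_
    field_simp
    ring
  have hmono : MonotoneOn G (Ioc 0 1) := by
    refine monotoneOn_of_hasDerivWithinAt_nonneg (convex_Ioc 0 1)
      (f' := fun u => (1 - u) / (u * (2 - u)) * (u * log u + (2 - u) * log (2 - u)))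
      (fun u hu => (hG u hu.1 (by linarith [hu.2])).continuousAt.continuousWithinAt)
      (fun u hu => ?_) fun u hu => ?_
    all_goals rw [interior_Ioc] at hu; obtain ⟨hu0, hu1⟩ := hu
    · exact (hG u hu0 (by linarith)).hasDerivWithinAt
    · have hentropy : 0 ≤ u * log u + (2 - u) * log (2 - u) := by
        have := negMulLog_le_one_sub_self hu0.le
        have := negMulLog_le_one_sub_self (by linarith : (0 : ℝ) ≤ 2 - u)
        simp only [negMulLog] at *
        linarith
      have : 0 ≤ (1 - u) / (u * (2 - u)) := div_nonneg (by linarith) (by nlinarith)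
      positivity
  have := hmono ⟨hu0, hu1⟩ ⟨one_pos, le_rfl⟩ hu1
  norm_num [G] at this
  linarith

lemma jsDiv_div_sq_antitoneOn {y : ℝ} (hy : 0 < y) :
    AntitoneOn (fun x => jsDiv x y / (log y - log ((x + y) / 2)) ^ 2) (Ico 0 y) := by
  have hℓ : ∀ x ∈ Ico 0 y, 0 < log y - log ((x + y) / 2) := fun x hx =>
    sub_pos.2 (log_lt_log (by linarith [hx.1]) (by linarith [hx.2]))
  refine antitoneOn_of_hasDerivWithinAt_nonpos (convex_Ico 0 y)
    (f' := fun x => (x * (log x - log ((x + y) / 2)) + y * (log y - log ((x + y) / 2))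
      + (x + y) / 2 * (log x - log ((x + y) / 2)) * (log y - log ((x + y) / 2)))
      / ((x + y) * (log y - log ((x + y) / 2)) ^ 3)) ?_ (fun x hx => ?_) fun x hx => ?_
  · have hmid : ContinuousOn (fun x => log y - log ((x + y) / 2)) (Ico 0 y) :=
      continuousOn_const.sub <| (continuous_add_const y).div_const 2 |>.continuousOn.log
        fun x hx => by linarith [hx.1]
    exact ((continuous_jsDiv y).continuousOn.congr fun x _ => jsDiv_comm x y).div (hmid.pow 2)
      fun x hx => pow_ne_zero 2 (hℓ x hx).ne'
  all_goals rw [interior_Ico] at hx; obtain ⟨hx0, hxy⟩ := hx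
  · have hm : (x + y) / 2 ≠ 0 := by positivity
    have hℓx := (hℓ x ⟨hx0.le, hxy⟩).ne'
    have hℓ' : HasDerivAt (fun x => log y - log ((x + y) / 2)) (0 - 1 / 2 / ((x + y) / 2)) x :=
      (hasDerivAt_const x _).sub ((((hasDerivAt_id' x).add_const y).div_const 2).log hm)
    refine ((hasDerivAt_jsDiv_left hx0.ne' (by positivity)).fun_div (hℓ'.fun_pow 2)
      (pow_ne_zero 2 hℓx)).hasDerivWithinAt.congr_deriv ?_
    rw [jsDiv_eq]
    field_simp
    ring
  · set m := (x + y) / 2 with hm_def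
    have hm : 0 < m := by positivity
    have hG := log_mul_log_two_sub_le (u := x / m) (by positivity)
      ((div_le_one hm).2 (by linarith [hm_def]))
    rw [show 2 - x / m = y / m by field_simp; ring, log_div hx0.ne' hm.ne',
      log_div hy.ne' hm.ne'] at hG
    have hℓx := hℓ x ⟨hx0.le, hxy⟩
    apply div_nonpos_of_nonpos_of_nonneg _ (by positivity)
    have : m * ((log x - log m) * (log y - log m)) ≤
        m * -(x / m * (log x - log m) + y / m * (log y - log m)) :=
      mul_le_mul_of_nonneg_left hG hm.le
    field_simp at this
    linarith

lemma sqrt_jsDiv_sub_sqrt_jsDiv_antitoneOn {a c : ℝ} (ha : 0 ≤ a) (hac : a < c) :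
    AntitoneOn (fun y => √(jsDiv a y) - √(jsDiv c y)) (Ici c) := by
  have hc := ha.trans_lt hac
  refine antitoneOn_of_hasDerivWithinAt_nonpos (convex_Ici c)
    (f' := fun y => (log y - log ((a + y) / 2)) / 2 / (2 * √(jsDiv a y))
      - (log y - log ((c + y) / 2)) / 2 / (2 * √(jsDiv c y)))
    ((continuous_jsDiv a).sqrt.sub (continuous_jsDiv c).sqrt).continuousOn
    (fun y hy => ?_) fun y hy => ?_
  all_goals
    rw [interior_Ici, Set.mem_Ioi] at hy
    have hy0 : 0 < y := hc.trans hy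
    have hA := jsDiv_pos ha hy0.le (hac.trans hy).ne
    have hC := jsDiv_pos hc.le hy0.le hy.ne
  · exact (((hasDerivAt_jsDiv hy0.ne' (by positivity)).sqrt hA.ne').sub
      ((hasDerivAt_jsDiv hy0.ne' (by positivity)).sqrt hC.ne')).hasDerivWithinAt
  · have hℓa : 0 < log y - log ((a + y) / 2) :=
      sub_pos.2 (log_lt_log (by positivity) (by linarith [hac.trans hy]))
    have hℓc : 0 < log y - log ((c + y) / 2) :=
      sub_pos.2 (log_lt_log (by positivity) (by linarith))
    have hratio := jsDiv_div_sq_antitoneOn hy0 ⟨ha, hac.trans hy⟩ ⟨hc.le, hy⟩ hac.le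
    rw [div_le_div_iff₀ (by positivity) (by positivity)] at hratio
    have hsq : ((log y - log ((a + y) / 2)) * √(jsDiv c y)) ^ 2
        ≤ ((log y - log ((c + y) / 2)) * √(jsDiv a y)) ^ 2 := by
      rw [mul_pow, mul_pow, sq_sqrt hA.le, sq_sqrt hC.le]
      linarith
    have := (pow_le_pow_iff_left₀ (by positivity) (by positivity) two_ne_zero).1 hsq
    rw [sub_nonpos, div_div, div_div, div_le_div_iff₀ (by positivity) (by positivity)]
    nlinarith

lemma sqrt_jsDiv_le_add {a b c : ℝ} (ha : 0 ≤ a) (hb : 0 ≤ b) (hc : 0 ≤ c) :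
    √(jsDiv a b) ≤ √(jsDiv a c) + √(jsDiv c b) := by
  wlog hab : a ≤ b generalizing a b
  · have := this hb ha (le_of_not_ge hab)
    rw [jsDiv_comm b a, jsDiv_comm b c, jsDiv_comm c a] at this
    linarith
  rcases le_or_gt c a with hca | hac
  · have := jsDiv_antitoneOn b ⟨hc, hca.trans hab⟩ ⟨ha, hab⟩ hca
    rw [jsDiv_comm b a, jsDiv_comm b c] at this
    linarith [sqrt_le_sqrt this, sqrt_nonneg (jsDiv a c)]
  rcases le_or_gt b c with hbc | hcb
  · have := jsDiv_monotoneOn ha hab (hab.trans hbc) hbc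
    linarith [sqrt_le_sqrt this, sqrt_nonneg (jsDiv c b)]
  · have := sqrt_jsDiv_sub_sqrt_jsDiv_antitoneOn ha hac self_mem_Ici hcb.le hcb.le
    simp only [jsDiv_self, sqrt_zero, sub_zero] at this
    linarith

lemma sqrt_sum_le_sqrt_sum_add_sqrt_sum {ι : Type*} [Fintype ι] {u v w : ι → ℝ}
    (hv : ∀ i, 0 ≤ v i) (hw : ∀ i, 0 ≤ w i) (h : ∀ i, √(u i) ≤ √(v i) + √(w i)) :
    √(∑ i, u i) ≤ √(∑ i, v i) + √(∑ i, w i) := by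
  let V : EuclideanSpace ℝ ι := WithLp.toLp 2 fun i => √(v i)
  let W : EuclideanSpace ℝ ι := WithLp.toLp 2 fun i => √(w i)
  have hnorm : ∀ f : ι → ℝ, ‖(WithLp.toLp 2 f : EuclideanSpace ℝ ι)‖ = √(∑ i, f i ^ 2) := by
    intro f
    simp [EuclideanSpace.norm_eq]
  calc √(∑ i, u i) ≤ √(∑ i, (√(v i) + √(w i)) ^ 2) :=
        sqrt_le_sqrt (Finset.sum_le_sum fun i _ => (sqrt_le_iff.1 (h i)).2)
    _ = ‖V + W‖ := (hnorm _).symm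
    _ ≤ ‖V‖ + ‖W‖ := norm_add_le V W
    _ = √(∑ i, v i) + √(∑ i, w i) := by
      simp only [V, W, hnorm, sq_sqrt (hv _), sq_sqrt (hw _)]

lemma ite_mul_log_div {a m : ℝ} (h : a ≠ 0 → m ≠ 0) :
    (if a = 0 then 0 else a * log (a / m)) = a * (log a - log m) := by
  split_ifs with ha
  · simp [ha]
  · rw [log_div ha (h ha)]

lemma JSD_eq_sqrt_sum_jsDiv {X : Type*} [Fintype X] {p q : X → ℝ} (hp : ∀ x, 0 ≤ p x)
    (hq : ∀ x, 0 ≤ q x) : JSD p q = √(∑ x, jsDiv (p x) (q x)) := by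
  simp only [JSD, KL, Finset.mul_sum, ← Finset.sum_add_distrib]
  congr 1
  refine Finset.sum_congr rfl fun x _ => ?_
  have hp' := hp x
  have hq' := hq x
  rw [ite_mul_log_div fun h => by positivity, ite_mul_log_div fun h => by positivity, jsDiv_eq]
  ring

theorem jsd_is_metric_general {X : Type*} [Fintype X]
    (p q r : X → ℝ) (hp : IsProbVec p) (hq : IsProbVec q) (hr : IsProbVec r) :
    0 ≤ JSD p q ∧ (JSD p q = 0 ↔ p = q) ∧ JSD p q = JSD q p ∧
      JSD p q ≤ JSD p r + JSD r q := by
  have hpq : ∀ x, 0 ≤ jsDiv (p x) (q x) := fun x => jsDiv_nonneg (hp.1 x) (hq.1 x)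
  rw [JSD_eq_sqrt_sum_jsDiv hp.1 hq.1, JSD_eq_sqrt_sum_jsDiv hq.1 hp.1,
    JSD_eq_sqrt_sum_jsDiv hp.1 hr.1, JSD_eq_sqrt_sum_jsDiv hr.1 hq.1]
  refine ⟨sqrt_nonneg _, ?_, by simp only [jsDiv_comm (p _)], ?_⟩
  · rw [sqrt_eq_zero (Finset.sum_nonneg fun x _ => hpq x),
      Finset.sum_eq_zero_iff_of_nonneg fun x _ => hpq x, funext_iff]
    simp only [Finset.mem_univ, true_implies, jsDiv_eq_zero_iff (hp.1 _) (hq.1 _)]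
  · exact sqrt_sum_le_sqrt_sum_add_sqrt_sum (fun x => jsDiv_nonneg (hp.1 x) (hr.1 x))
      (fun x => jsDiv_nonneg (hr.1 x) (hq.1 x))
      fun x => sqrt_jsDiv_le_add (hp.1 x) (hq.1 x) (hr.1 x)

theorem jsd_is_metric {X : Type*} [Fintype X] [Nonempty X]
    (p q r : X → ℝ) (hp : IsProbVec p) (hq : IsProbVec q) (hr : IsProbVec r) :
    0 ≤ JSD p q ∧ (JSD p q = 0 ↔ p = q) ∧ JSD p q = JSD q p ∧
      JSD p q ≤ JSD p r + JSD r q :=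
  jsd_is_metric_general p q r hp hq hr
end
end

section
/- Shortness of the Jensen–Shannon distance under deterministic post-processing: for any probability vectors p, q on a finite nonempty type X and any function f : X → Y into a finite nonempty type Y, D_JSD(f_*p, f_*q) ≤ D_JSD(p,q), where the pushforward is defined by (f_*p)(y) = ∑_{x : f(x)=y} p(x). -/
/-!
The mixture `(f_*p + f_*q)/2` is the pushforward of `m = (p + q)/2`, so it suffices that
`KL (f_*p) (f_*m) ≤ KL p m` and likewise for `q`. Splitting `KL p m` along the fibres of `f`,
this is the log-sum inequality on each fibre, obtained by summing the tangent-line bound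
`a log (a/b) ≥ a log r + a - r b` (i.e. `log t ≥ 1 - 1/t`) at the ratio `r = (∑ a)/(∑ b)`.
-/

open Finset Matrix

noncomputable section

/-- Pushforward of a probability vector along a function. -/
noncomputable def pushforward {X Y : Type*} [Fintype X] [Fintype Y] [DecidableEq Y]
    (f : X → Y) (p : X → ℝ) : Y → ℝ :=
  fun y => ∑ x ∈ Finset.univ.filter (fun x => f x = y), p x

open Real

lemma mul_log_add_sub_le_mul_log_div {a b r : ℝ} (ha : 0 ≤ a) (hb : 0 ≤ b)
    (hab : a ≠ 0 → 0 < b) (hr : 0 < r) :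
    a * log r + a - r * b ≤ a * log (a / b) := by
  rcases ha.eq_or_lt with rfl | ha
  · simpa using mul_nonneg hr.le hb
  have hb := hab ha.ne'
  have hlog : log (a / (r * b)) = log (a / b) - log r := by
    rw [mul_comm, ← div_div, log_div (by positivity) hr.ne']
  have htangent := mul_le_mul_of_nonneg_left (one_sub_inv_le_log_of_pos (x := a / (r * b))
    (by positivity)) ha.le
  rw [hlog, inv_div, mul_sub, mul_one, mul_div_cancel₀ _ ha.ne'] at htangent
  linarith

lemma sum_mul_log_div_sum_le {ι : Type*} (s : Finset ι) {a b : ι → ℝ}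
    (ha : ∀ i ∈ s, 0 ≤ a i) (hb : ∀ i ∈ s, 0 ≤ b i) (hab : ∀ i ∈ s, a i ≠ 0 → 0 < b i) :
    (∑ i ∈ s, a i) * log ((∑ i ∈ s, a i) / ∑ i ∈ s, b i) ≤ ∑ i ∈ s, a i * log (a i / b i) := by
  rcases (sum_nonneg ha).eq_or_lt with hA | hA
  · have hzero : ∀ i ∈ s, a i = 0 := (sum_eq_zero_iff_of_nonneg ha).mp hA.symm
    rw [← hA, zero_mul, sum_eq_zero fun i hi => by rw [hzero i hi, zero_mul]]
  set A := ∑ i ∈ s, a i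
  set B := ∑ i ∈ s, b i
  have hB : 0 < B := by
    obtain ⟨i, hi, hai⟩ := exists_lt_of_sum_lt (hA.trans_eq' sum_const_zero.symm)
    exact sum_pos' hb ⟨i, hi, hab i hi hai.ne'⟩
  calc A * log (A / B) = ∑ i ∈ s, (a i * log (A / B) + a i - A / B * b i) := by
        rw [sum_sub_distrib, sum_add_distrib, ← sum_mul, ← mul_sum, div_mul_cancel₀ _ hB.ne']
        ring
    _ ≤ ∑ i ∈ s, a i * log (a i / b i) := sum_le_sum fun i hi =>
        mul_log_add_sub_le_mul_log_div (ha i hi) (hb i hi) (hab i hi) (div_pos hA hB)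

lemma KL_eq_sum {X : Type*} [Fintype X] (p q : X → ℝ) :
    KL p q = ∑ x, p x * log (p x / q x) :=
  sum_congr rfl fun x _ => by split_ifs with h <;> simp [h]

lemma pushforward_add_div_two {X Y : Type*} [Fintype X] [Fintype Y] [DecidableEq Y]
    (f : X → Y) (p q : X → ℝ) :
    pushforward f (fun x => (p x + q x) / 2) =
      fun y => (pushforward f p y + pushforward f q y) / 2 := by
  funext y
  simp only [pushforward, ← sum_add_distrib, sum_div]

lemma KL_pushforward_le {X Y : Type*} [Fintype X] [Fintype Y] [DecidableEq Y]
    (f : X → Y) {p q : X → ℝ} (hp : ∀ x, 0 ≤ p x) (hq : ∀ x, 0 ≤ q x)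
    (hpq : ∀ x, p x ≠ 0 → 0 < q x) :
    KL (pushforward f p) (pushforward f q) ≤ KL p q := by
  rw [KL_eq_sum, KL_eq_sum, ← sum_fiberwise univ f]
  exact sum_le_sum fun y _ =>
    sum_mul_log_div_sum_le _ (fun x _ => hp x) (fun x _ => hq x) (fun x _ => hpq x)

theorem jsd_shortness_pushforward_general {X Y : Type*} [Fintype X]
    [Fintype Y] [DecidableEq Y]
    (f : X → Y) (p q : X → ℝ) (hp : IsProbVec p) (hq : IsProbVec q) :
    JSD (pushforward f p) (pushforward f q) ≤ JSD p q := by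
  have hm : ∀ x, 0 ≤ (p x + q x) / 2 := fun x => by
    have := hp.1 x; have := hq.1 x; positivity
  have hpm : ∀ x, p x ≠ 0 → 0 < (p x + q x) / 2 := fun x h => by
    have := (hp.1 x).lt_of_ne' h; have := hq.1 x; positivity
  have hqm : ∀ x, q x ≠ 0 → 0 < (p x + q x) / 2 := fun x h => by
    have := hp.1 x; have := (hq.1 x).lt_of_ne' h; positivity
  unfold JSD
  rw [← pushforward_add_div_two]
  gcongr
  · exact KL_pushforward_le f hp.1 hm hpm
  · exact KL_pushforward_le f hq.1 hm hqm

theorem jsd_shortness_pushforward {X Y : Type*} [Fintype X] [Nonempty X]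
    [Fintype Y] [Nonempty Y] [DecidableEq Y]
    (f : X → Y) (p q : X → ℝ) (hp : IsProbVec p) (hq : IsProbVec q) :
    JSD (pushforward f p) (pushforward f q) ≤ JSD p q :=
  jsd_shortness_pushforward_general f p q hp hq
end
end

section
/- Uniform pullback property: if α is an abstraction matrix indexed by N×M and α⁺ = αᵀ·(α·αᵀ)⁻¹, then for all i ∈ M and j ∈ N, α⁺(i,j) = α(j,i)/c_j, where c_j is the number of indices i' ∈ M with α(j,i') = 1; in particular α⁺ is column-stochastic (all entries are nonnegative and every column sums to 1), i.e., each column j of α⁺ is the uniform probability distribution over the preimage {i : α(j,i) = 1}. -/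
open Finset Matrix

noncomputable section

theorem abs_pinv_uniform_pullback {N M : Type*}
    [Fintype N] [Nonempty N] [DecidableEq N] [Fintype M] [Nonempty M]
    (α : Matrix N M ℝ) (hα : IsAbsMatrix α) :
    (∀ i j, pinv α i j = α j i / ((Finset.univ.filter fun i' => α j i' = 1).card : ℝ)) ∧
    IsColStoch (pinv α) := by

  obtain ⟨h01, hcol, hrow⟩ := hα
  classical
  set c : N → ℝ := fun j => ((Finset.univ.filter fun i' => α j i' = 1).card : ℝ) with hc
  have hsum : ∀ j, ∑ i, α j i = c j := by
    intro j
    have : ∀ i, α j i = if α j i = 1 then (1:ℝ) else 0 := by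
      intro i; rcases h01 j i with h | h <;> simp [h]
    rw [Finset.sum_congr rfl fun i _ => this i, Finset.sum_boole]
  have hcpos : ∀ j, 0 < c j := by
    intro j
    obtain ⟨i, hi⟩ := hrow j
    have : (Finset.univ.filter fun i' => α j i' = 1).Nonempty := ⟨i, by simp [hi]⟩
    simpa [hc] using Finset.card_pos.mpr this
  have hdiag : α * αᵀ = Matrix.diagonal c := by
    ext j k
    by_cases hjk : j = k
    · subst hjk
      simp only [Matrix.mul_apply, Matrix.transpose_apply, Matrix.diagonal_apply_eq]
      rw [← hsum j]
      apply Finset.sum_congr rfl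
      intro i _
      rcases h01 j i with h | h <;> simp [h]
    · simp only [Matrix.mul_apply, Matrix.transpose_apply, Matrix.diagonal_apply_ne _ hjk]
      apply Finset.sum_eq_zero
      intro i _
      rcases h01 j i with h | h
      · simp [h]
      · rcases h01 k i with h2 | h2
        · simp [h2]
        · exact absurd ((hcol i).unique h h2) hjk
  have hinv : (α * αᵀ)⁻¹ = Matrix.diagonal (fun j => (c j)⁻¹) := by
    rw [hdiag]
    apply Matrix.inv_eq_right_inv
    rw [Matrix.diagonal_mul_diagonal]
    convert Matrix.diagonal_one
    exact mul_inv_cancel₀ (hcpos _).ne'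
  have hentry : ∀ i j, pinv α i j = α j i / c j := by
    intro i j
    rw [pinv, hinv]
    simp [Matrix.mul_apply, Matrix.diagonal_apply, Finset.sum_ite_eq,
      div_eq_mul_inv]
  refine ⟨hentry, ?_, ?_⟩
  · intro i j
    rw [hentry i j]
    rcases h01 j i with h | h
    · simp [h]
    · rw [h]; positivity
  · intro j
    have : ∑ i, pinv α i j = (∑ i, α j i) / c j := by
      rw [Finset.sum_div]
      exact Finset.sum_congr rfl fun i _ => hentry i j
    rw [this, hsum j, div_self (hcpos j).ne']
end
end

section
/- Triangle inequality for the interventional consistency (IC) error under composition of abstractions: D(β_Y·α_Y·μ, μ''·β_X·α_X) ≤ D(α_Y·μ, μ'·α_X) + D(β_Y·μ', μ''·β_X). -/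
open Finset Matrix

noncomputable section

/-!
Coordinatewise, the Jensen–Shannon divergence is a sum of terms `jsTerm a b` (entropy of the
mean minus mean entropy), and `4 * jsTerm p q = ∫₀^∞ ((e^{-pt} - e^{-qt}) / t)² dt`: write one
factor as `∫ s in p..q, e^{-st}`, swap the integrals, and evaluate the `t`-integral by Frullani.
So `√jsTerm` is an `L²` distance and, by Minkowski, `JSD` satisfies the triangle inequality on
nonnegative vectors. By the log-sum inequality `jsTerm` is subadditive, and it is positively
homogeneous, so `JSD` contracts under column-stochastic matrices, abstraction matrices among them.

An abstraction matrix `αX` reindexes columns along a map `g`, so column `x` of `μ'' βX αX` is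
column `g x` of `μ'' βX`. Passing through column `x` of `βY μ' αX` by the triangle inequality,
and using the contraction under `βY`, bounds column `x` by the two sup-JSD distances.
-/

open Real MeasureTheory Set

def jsTerm (a b : ℝ) : ℝ := negMulLog ((a + b) / 2) - (negMulLog a + negMulLog b) / 2

lemma jsTerm_comm (a b : ℝ) : jsTerm a b = jsTerm b a := by
  simp only [jsTerm, add_comm]

lemma jsTerm_nonneg {a b : ℝ} (ha : 0 ≤ a) (hb : 0 ≤ b) : 0 ≤ jsTerm a b := by
  have h := concaveOn_negMulLog.2 (mem_Ici.2 ha) (mem_Ici.2 hb) (by norm_num : (0 : ℝ) ≤ 1 / 2)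
    (by norm_num : (0 : ℝ) ≤ 1 / 2) (by norm_num)
  simp only [smul_eq_mul] at h
  rw [jsTerm, show (a + b) / 2 = 1 / 2 * a + 1 / 2 * b by ring]
  linarith

lemma jsTerm_mul_mul (k a b : ℝ) : jsTerm (k * a) (k * b) = k * jsTerm a b := by
  simp only [jsTerm, ← mul_add, mul_div_assoc, negMulLog_mul]
  ring

lemma mul_log_div_eq_sub {m : ℝ} (a : ℝ) (hm : m ≠ 0) :
    a * log (a / m) = a * log a - a * log m := by
  rcases eq_or_ne a 0 with rfl | ha
  · simp
  · rw [log_div ha hm]; ring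

lemma jsTerm_eq_mul_log_div {a b : ℝ} (ha : 0 ≤ a) (hb : 0 ≤ b) :
    jsTerm a b = (a * log (a / ((a + b) / 2)) + b * log (b / ((a + b) / 2))) / 2 := by
  rcases (add_nonneg ha hb).eq_or_lt with hab | hab
  · obtain ⟨rfl, rfl⟩ : a = 0 ∧ b = 0 := ⟨by linarith, by linarith⟩
    simp [jsTerm]
  · rw [mul_log_div_eq_sub a (by positivity), mul_log_div_eq_sub b (by positivity)]
    simp only [jsTerm, negMulLog]
    ring

lemma mul_log_div_add_le {a b c d : ℝ} (ha : 0 ≤ a) (hc : 0 ≤ c) (hb : 0 < b) (hd : 0 < d) :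
    (a + c) * log ((a + c) / (b + d)) ≤ a * log (a / b) + c * log (c / d) := by
  have hbd : 0 < b + d := add_pos hb hd
  have h := convexOn_mul_log.2 (mem_Ici.2 (div_nonneg ha hb.le)) (mem_Ici.2 (div_nonneg hc hd.le))
    (div_nonneg hb.le hbd.le) (div_nonneg hd.le hbd.le) (by field_simp)
  simp only [smul_eq_mul] at h
  rw [show b / (b + d) * (a / b) + d / (b + d) * (c / d) = (a + c) / (b + d) by field_simp] at h
  have h' := mul_le_mul_of_nonneg_left h hbd.le
  calc (a + c) * log ((a + c) / (b + d))
      = (b + d) * ((a + c) / (b + d) * log ((a + c) / (b + d))) := by field_simp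
    _ ≤ _ := h'
    _ = a * log (a / b) + c * log (c / d) := by field_simp

lemma jsTerm_add_le {a b c d : ℝ} (ha : 0 ≤ a) (hb : 0 ≤ b) (hc : 0 ≤ c) (hd : 0 ≤ d) :
    jsTerm (a + c) (b + d) ≤ jsTerm a b + jsTerm c d := by
  rcases (add_nonneg ha hb).eq_or_lt with hab | hab
  · obtain ⟨rfl, rfl⟩ : a = 0 ∧ b = 0 := ⟨by linarith, by linarith⟩
    simp [jsTerm]
  rcases (add_nonneg hc hd).eq_or_lt with hcd | hcd
  · obtain ⟨rfl, rfl⟩ : c = 0 ∧ d = 0 := ⟨by linarith, by linarith⟩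
    simp [jsTerm]
  have hm : (a + c + (b + d)) / 2 = (a + b) / 2 + (c + d) / 2 := by ring
  have h₁ := mul_log_div_add_le ha hc (half_pos hab) (half_pos hcd)
  have h₂ := mul_log_div_add_le hb hd (half_pos hab) (half_pos hcd)
  rw [jsTerm_eq_mul_log_div (add_nonneg ha hc) (add_nonneg hb hd), hm,
    jsTerm_eq_mul_log_div ha hb, jsTerm_eq_mul_log_div hc hd]
  linarith

lemma jsTerm_sum_le {ι : Type*} (s : Finset ι) {u v : ι → ℝ} (hu : ∀ i ∈ s, 0 ≤ u i)
    (hv : ∀ i ∈ s, 0 ≤ v i) :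
    jsTerm (∑ i ∈ s, u i) (∑ i ∈ s, v i) ≤ ∑ i ∈ s, jsTerm (u i) (v i) := by
  have := Finset.le_sum_of_subadditive_on_pred (fun z : ℝ × ℝ => jsTerm z.1 z.2)
    (fun z => 0 ≤ z.1 ∧ 0 ≤ z.2) (by simp [jsTerm])
    (fun x y hx hy => jsTerm_add_le hx.1 hx.2 hy.1 hy.2)
    (fun x y hx hy => ⟨add_nonneg hx.1 hy.1, add_nonneg hx.2 hy.2⟩)
    (fun i => (u i, v i)) (s := s) (fun i hi => ⟨hu i hi, hv i hi⟩)
  simpa only [Prod.fst_sum, Prod.snd_sum] using this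

lemma sum_jsTerm_mulVec_le {Y X : Type*} [Fintype Y] [Fintype X] {K : Matrix Y X ℝ}
    (hK : IsColStoch K) {u v : X → ℝ} (hu : ∀ x, 0 ≤ u x) (hv : ∀ x, 0 ≤ v x) :
    ∑ y, jsTerm ((K *ᵥ u) y) ((K *ᵥ v) y) ≤ ∑ x, jsTerm (u x) (v x) :=
  calc ∑ y, jsTerm ((K *ᵥ u) y) ((K *ᵥ v) y)
      ≤ ∑ y, ∑ x, jsTerm (K y x * u x) (K y x * v x) :=
        Finset.sum_le_sum fun y _ => jsTerm_sum_le _ (fun x _ => mul_nonneg (hK.1 y x) (hu x))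
          (fun x _ => mul_nonneg (hK.1 y x) (hv x))
    _ = ∑ x, (∑ y, K y x) * jsTerm (u x) (v x) := by
        simp only [jsTerm_mul_mul, Finset.sum_mul]
        exact Finset.sum_comm
    _ = ∑ x, jsTerm (u x) (v x) := by simp only [hK.2, one_mul]

lemma JSD_eq_sqrt_sum_jsTerm {X : Type*} [Fintype X] {p q : X → ℝ} (hp : ∀ x, 0 ≤ p x)
    (hq : ∀ x, 0 ≤ q x) : JSD p q = √(∑ x, jsTerm (p x) (q x)) := by
  have hKL (a b : ℝ) : (if a = 0 then 0 else a * log (a / b)) = a * log (a / b) := by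
    split_ifs with h <;> simp [h]
  simp only [JSD, KL, hKL, Finset.mul_sum, ← Finset.sum_add_distrib,
    jsTerm_eq_mul_log_div (hp _) (hq _)]
  congr 1
  exact Finset.sum_congr rfl fun x _ => by ring

lemma mulVec_nonneg {Y X : Type*} [Fintype X] {K : Matrix Y X ℝ} (hK : ∀ y x, 0 ≤ K y x)
    {u : X → ℝ} (hu : ∀ x, 0 ≤ u x) (y : Y) : 0 ≤ (K *ᵥ u) y :=
  Finset.sum_nonneg fun x _ => mul_nonneg (hK y x) (hu x)

lemma JSD_mulVec_le {Y X : Type*} [Fintype Y] [Fintype X] {K : Matrix Y X ℝ}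
    (hK : IsColStoch K) {u v : X → ℝ} (hu : ∀ x, 0 ≤ u x) (hv : ∀ x, 0 ≤ v x) :
    JSD (K *ᵥ u) (K *ᵥ v) ≤ JSD u v := by
  rw [JSD_eq_sqrt_sum_jsTerm (mulVec_nonneg hK.1 hu) (mulVec_nonneg hK.1 hv),
    JSD_eq_sqrt_sum_jsTerm hu hv]
  exact Real.sqrt_le_sqrt (sum_jsTerm_mulVec_le hK hu hv)

lemma integral_exp_neg_mul (a b : ℝ) {t : ℝ} (ht : t ≠ 0) :
    ∫ u in a..b, exp (-u * t) = (exp (-a * t) - exp (-b * t)) / t := by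
  have := intervalIntegral.integral_comp_mul_right exp (neg_ne_zero.2 ht) (a := a) (b := b)
  simp only [mul_neg, ← neg_mul, integral_exp, smul_eq_mul] at this ⊢
  rw [this]
  field_simp
  ring

lemma ofReal_exp_sub_exp_div_eq_lintegral {a b t : ℝ} (hab : a ≤ b) (ht : 0 < t) :
    ENNReal.ofReal ((exp (-a * t) - exp (-b * t)) / t)
      = ∫⁻ u in Ioc a b, ENNReal.ofReal (exp (-u * t)) := by
  have hcont : Continuous fun u => exp (-u * t) := by fun_prop
  rw [← ofReal_integral_eq_lintegral_ofReal hcont.integrableOn_Ioc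
    (ae_of_all _ fun u => (exp_pos _).le), ← intervalIntegral.integral_of_le hab,
    integral_exp_neg_mul a b ht.ne']

lemma lintegral_exp_neg_mul_Ioi {u : ℝ} (hu : 0 < u) :
    ∫⁻ t in Ioi 0, ENNReal.ofReal (exp (-u * t)) = ENNReal.ofReal u⁻¹ := by
  rw [← ofReal_integral_eq_lintegral_ofReal (integrableOn_exp_mul_Ioi (neg_neg_iff_pos.2 hu) 0)
    (ae_of_all _ fun t => (exp_pos _).le), integral_exp_mul_Ioi (neg_neg_iff_pos.2 hu)]
  simp

-- Frullani's integral for `exp`; in `ℝ≥0∞`, Tonelli provides the integrability for free.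
lemma lintegral_exp_sub_exp_div {a b : ℝ} (ha : 0 < a) (hab : a ≤ b) :
    ∫⁻ t in Ioi 0, ENNReal.ofReal ((exp (-a * t) - exp (-b * t)) / t)
      = ENNReal.ofReal (log b - log a) := by
  have hb : 0 < b := ha.trans_le hab
  rw [setLIntegral_congr_fun measurableSet_Ioi fun t ht =>
      ofReal_exp_sub_exp_div_eq_lintegral hab ht,
    lintegral_lintegral_swap (by fun_prop),
    setLIntegral_congr_fun measurableSet_Ioc fun u hu => lintegral_exp_neg_mul_Ioi (ha.trans hu.1),
    ← ofReal_integral_eq_lintegral_ofReal, ← intervalIntegral.integral_of_le hab,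
    integral_inv_of_pos ha hb, log_div hb.ne' ha.ne']
  · exact (continuousOn_inv₀.mono fun u hu => (ha.trans_le hu.1).ne').integrableOn_Icc.mono_set
      Ioc_subset_Icc_self
  · exact (ae_restrict_mem measurableSet_Ioc).mono fun u hu => inv_nonneg.2 (ha.trans hu.1).le

lemma intervalIntegrable_log_add (a b c : ℝ) :
    IntervalIntegrable (fun s => log (s + c)) volume a b := by
  simpa using intervalIntegral.intervalIntegrable_log'.comp_add_right (a := a + c) (b := b + c) c

lemma integral_log_add_sub_log_add (p q : ℝ) :
    ∫ s in p..q, (log (s + q) - log (s + p)) = 4 * jsTerm p q := by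
  rw [intervalIntegral.integral_sub (intervalIntegrable_log_add p q q)
    (intervalIntegrable_log_add p q p), intervalIntegral.integral_comp_add_right log,
    intervalIntegral.integral_comp_add_right log, integral_log, integral_log]
  have h₂ (x : ℝ) : (x + x) * log (x + x) = 2 * (x * log x) - x * negMulLog 2 := by
    have := negMulLog_mul 2 x
    simp only [negMulLog] at this ⊢
    rw [← two_mul]
    linear_combination (-1 : ℝ) * this
  have hm := h₂ ((p + q) / 2)
  rw [add_halves] at hm
  rw [add_comm q p, h₂ p, h₂ q, hm]
  simp only [jsTerm, negMulLog]
  ring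

lemma lintegral_sq_exp_sub_exp_div_of_le {p q : ℝ} (hp : 0 ≤ p) (hpq : p ≤ q) :
    ∫⁻ t in Ioi 0, ENNReal.ofReal (((exp (-p * t) - exp (-q * t)) / t) ^ 2)
      = ENNReal.ofReal (4 * jsTerm p q) := by
  set f : ℝ → ℝ := fun t => (exp (-p * t) - exp (-q * t)) / t
  have hf : ∀ t ∈ Ioi (0 : ℝ), 0 ≤ f t := fun t ht =>
    div_nonneg (sub_nonneg.2 (exp_le_exp.2 (by nlinarith [mem_Ioi.1 ht]))) (le_of_lt ht)
  have hsplit : ∀ t ∈ Ioi (0 : ℝ), ENNReal.ofReal (f t ^ 2)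
      = ∫⁻ s in Ioc p q, ENNReal.ofReal ((exp (-(s + p) * t) - exp (-(s + q) * t)) / t) := by
    intro t ht
    rw [sq, ENNReal.ofReal_mul (hf t ht)]
    nth_rw 2 [ofReal_exp_sub_exp_div_eq_lintegral hpq ht]
    rw [← lintegral_const_mul' _ _ ENNReal.ofReal_ne_top]
    refine lintegral_congr fun s => ?_
    rw [← ENNReal.ofReal_mul (hf t ht)]
    congr 1
    simp only [f, neg_add, add_mul, exp_add]
    ring
  rw [setLIntegral_congr_fun measurableSet_Ioi hsplit, lintegral_lintegral_swap (by fun_prop),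
    setLIntegral_congr_fun measurableSet_Ioc fun s hs =>
      lintegral_exp_sub_exp_div (by linarith [hs.1]) (by linarith : s + p ≤ s + q),
    ← ofReal_integral_eq_lintegral_ofReal, ← intervalIntegral.integral_of_le hpq,
    integral_log_add_sub_log_add]
  · exact (intervalIntegrable_iff_integrableOn_Ioc_of_le hpq).1
      ((intervalIntegrable_log_add p q q).sub (intervalIntegrable_log_add p q p))
  · exact (ae_restrict_mem measurableSet_Ioc).mono fun s hs =>
      sub_nonneg.2 (log_le_log (by linarith [hs.1]) (by linarith))

lemma lintegral_sq_exp_sub_exp_div {p q : ℝ} (hp : 0 ≤ p) (hq : 0 ≤ q) :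
    ∫⁻ t in Ioi 0, ENNReal.ofReal (((exp (-p * t) - exp (-q * t)) / t) ^ 2)
      = ENNReal.ofReal (4 * jsTerm p q) := by
  rcases le_total p q with hpq | hqp
  · exact lintegral_sq_exp_sub_exp_div_of_le hp hpq
  · rw [jsTerm_comm, ← lintegral_sq_exp_sub_exp_div_of_le hq hqp]
    congr! 3 with t
    ring

def expKernel (p t : ℝ) : ℝ := exp (-p * t) / t

lemma eLpNorm_expKernel_sub {p q : ℝ} (hp : 0 ≤ p) (hq : 0 ≤ q) :
    eLpNorm (expKernel p - expKernel q) 2 (volume.restrict (Ioi 0))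
      = ENNReal.ofReal (2 * √(jsTerm p q)) := by
  have hsq (t : ℝ) : ‖(expKernel p - expKernel q) t‖ₑ ^ (2 : ℝ)
      = ENNReal.ofReal (((exp (-p * t) - exp (-q * t)) / t) ^ 2) := by
    rw [Real.enorm_eq_ofReal_abs, ENNReal.ofReal_rpow_of_nonneg (abs_nonneg _) zero_le_two,
      rpow_two, sq_abs, Pi.sub_apply, expKernel, expKernel, sub_div]
  simp only [eLpNorm_eq_lintegral_rpow_enorm_toReal two_ne_zero ENNReal.ofNat_ne_top,
    ENNReal.toReal_ofNat, hsq, lintegral_sq_exp_sub_exp_div hp hq]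
  rw [ENNReal.ofReal_rpow_of_nonneg (by linarith [jsTerm_nonneg hp hq]) (by norm_num),
    ← sqrt_eq_rpow, sqrt_mul (by norm_num), show √4 = 2 by
      rw [show (4 : ℝ) = 2 ^ 2 by norm_num, sqrt_sq zero_le_two]]

lemma sqrt_jsTerm_triangle {p q r : ℝ} (hp : 0 ≤ p) (hq : 0 ≤ q) (hr : 0 ≤ r) :
    √(jsTerm p r) ≤ √(jsTerm p q) + √(jsTerm q r) := by
  have hmeas (a : ℝ) : AEStronglyMeasurable (expKernel a) (volume.restrict (Ioi 0)) :=
    (by unfold expKernel; fun_prop : Measurable (expKernel a)).aestronglyMeasurable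
  have h := eLpNorm_add_le ((hmeas p).sub (hmeas q)) ((hmeas q).sub (hmeas r)) one_le_two
  rw [sub_add_sub_cancel, eLpNorm_expKernel_sub hp hr, eLpNorm_expKernel_sub hp hq,
    eLpNorm_expKernel_sub hq hr, ← ENNReal.ofReal_add (by positivity) (by positivity),
    ENNReal.ofReal_le_ofReal_iff (by positivity)] at h
  linarith

lemma sqrt_sum_sq_add_le {X : Type*} [Fintype X] (u v : X → ℝ) :
    √(∑ x, (u x + v x) ^ 2) ≤ √(∑ x, u x ^ 2) + √(∑ x, v x ^ 2) := by
  simpa [EuclideanSpace.norm_eq, sq_abs] using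
    norm_add_le (WithLp.toLp 2 u : EuclideanSpace ℝ X) (WithLp.toLp 2 v)

lemma JSD_triangle {X : Type*} [Fintype X] {p q r : X → ℝ} (hp : ∀ x, 0 ≤ p x)
    (hq : ∀ x, 0 ≤ q x) (hr : ∀ x, 0 ≤ r x) : JSD p r ≤ JSD p q + JSD q r := by
  rw [JSD_eq_sqrt_sum_jsTerm hp hr, JSD_eq_sqrt_sum_jsTerm hp hq, JSD_eq_sqrt_sum_jsTerm hq hr]
  have hsq {a b : ℝ} (ha : 0 ≤ a) (hb : 0 ≤ b) : jsTerm a b = √(jsTerm a b) ^ 2 :=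
    (sq_sqrt (jsTerm_nonneg ha hb)).symm
  calc √(∑ x, jsTerm (p x) (r x))
      ≤ √(∑ x, (√(jsTerm (p x) (q x)) + √(jsTerm (q x) (r x))) ^ 2) := by
        gcongr with x
        rw [hsq (hp x) (hr x)]
        gcongr
        exact sqrt_jsTerm_triangle (hp x) (hq x) (hr x)
    _ ≤ _ := sqrt_sum_sq_add_le _ _
    _ = _ := by simp only [← hsq (hp _) (hq _), ← hsq (hq _) (hr _)]

lemma IsAbsMatrix.exists_eq_ite {N M : Type*} [Fintype N] [Fintype M] [DecidableEq N]
    {α : Matrix N M ℝ} (hα : IsAbsMatrix α) :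
    ∃ g : M → N, ∀ j i, α j i = if g i = j then 1 else 0 := by
  choose g hg using hα.2.1
  refine ⟨g, fun j i => ?_⟩
  split_ifs with h
  · exact h ▸ (hg i).1
  · exact (hα.1 j i).resolve_right fun h1 => h ((hg i).2 j h1).symm

lemma IsAbsMatrix.nonneg {N M : Type*} [Fintype N] [Fintype M] {α : Matrix N M ℝ}
    (hα : IsAbsMatrix α) (j : N) (i : M) : 0 ≤ α j i := by
  rcases hα.1 j i with h | h <;> simp [h]

lemma IsAbsMatrix.isColStoch {N M : Type*} [Fintype N] [Fintype M] {α : Matrix N M ℝ}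
    (hα : IsAbsMatrix α) : IsColStoch α := by
  classical
  obtain ⟨g, hg⟩ := hα.exists_eq_ite
  exact ⟨hα.nonneg, fun i => by simp [hg]⟩

lemma mul_apply_eq_of_eq_ite {Y X X' : Type*} [Fintype X'] [DecidableEq X'] {M : Matrix Y X' ℝ}
    {α : Matrix X' X ℝ} {g : X → X'} (hg : ∀ j i, α j i = if g i = j then 1 else 0)
    (y : Y) (x : X) : (M * α) y x = M y (g x) := by
  simp [Matrix.mul_apply, hg]

lemma JSD_col_le_supJSD {Y X : Type*} [Fintype Y] [Fintype X] [Nonempty X]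
    (M N : Matrix Y X ℝ) (x : X) : JSD (fun y => M y x) (fun y => N y x) ≤ supJSD M N :=
  Finset.le_sup' (fun x => JSD (fun y => M y x) (fun y => N y x)) (Finset.mem_univ x)

theorem ic_triangle_general {X X' X'' Y Y' Y'' : Type*}
    [Fintype X] [Nonempty X] [Fintype X'] [Nonempty X'] [Fintype X'']
    [Fintype Y] [Fintype Y'] [Fintype Y'']
    (μ : Matrix Y X ℝ) (μ' : Matrix Y' X' ℝ) (μ'' : Matrix Y'' X'' ℝ)
    (αX : Matrix X' X ℝ) (αY : Matrix Y' Y ℝ)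
    (βX : Matrix X'' X' ℝ) (βY : Matrix Y'' Y' ℝ)
    (hμ : IsColStoch μ) (hμ' : IsColStoch μ') (hμ'' : IsColStoch μ'')
    (hαX : IsAbsMatrix αX) (hαY : IsAbsMatrix αY)
    (hβX : IsAbsMatrix βX) (hβY : IsAbsMatrix βY) :
    supJSD (βY * αY * μ) (μ'' * βX * αX)
      ≤ supJSD (αY * μ) (μ' * αX) + supJSD (βY * μ') (μ'' * βX) := by
  classical
  obtain ⟨g, hg⟩ := hαX.exists_eq_ite
  refine Finset.sup'_le _ _ fun x _ => ?_
  let u : Y' → ℝ := fun y' => (αY * μ) y' x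
  let v : Y' → ℝ := fun y' => μ' y' (g x)
  let w : Y'' → ℝ := fun y'' => (μ'' * βX) y'' (g x)
  have hu : ∀ y', 0 ≤ u y' := mulVec_nonneg hαY.nonneg (hμ.1 · x)
  have hv : ∀ y', 0 ≤ v y' := (hμ'.1 · (g x))
  have hw : ∀ y'', 0 ≤ w y'' := mulVec_nonneg hμ''.1 (hβX.nonneg · (g x))
  have hcol₁ : (fun y'' => (βY * αY * μ) y'' x) = βY *ᵥ u := by rw [Matrix.mul_assoc]; rfl
  have hcol₂ : (fun y'' => (μ'' * βX * αX) y'' x) = w :=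
    funext (mul_apply_eq_of_eq_ite hg · x)
  have hcol₃ : (fun y' => (μ' * αX) y' x) = v := funext (mul_apply_eq_of_eq_ite hg · x)
  calc JSD (fun y'' => (βY * αY * μ) y'' x) (fun y'' => (μ'' * βX * αX) y'' x)
      = JSD (βY *ᵥ u) w := by rw [hcol₁, hcol₂]
    _ ≤ JSD (βY *ᵥ u) (βY *ᵥ v) + JSD (βY *ᵥ v) w :=
        JSD_triangle (mulVec_nonneg hβY.nonneg hu) (mulVec_nonneg hβY.nonneg hv) hw
    _ ≤ JSD u v + JSD (βY *ᵥ v) w := by gcongr; exact JSD_mulVec_le hβY.isColStoch hu hv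
    _ = JSD (fun y' => (αY * μ) y' x) (fun y' => (μ' * αX) y' x)
          + JSD (fun y'' => (βY * μ') y'' (g x)) (fun y'' => (μ'' * βX) y'' (g x)) := by
        rw [hcol₃]; rfl
    _ ≤ supJSD (αY * μ) (μ' * αX) + supJSD (βY * μ') (μ'' * βX) :=
        add_le_add (JSD_col_le_supJSD _ _ x) (JSD_col_le_supJSD _ _ (g x))

theorem ic_triangle {X X' X'' Y Y' Y'' : Type*}
    [Fintype X] [Nonempty X] [Fintype X'] [Nonempty X'] [Fintype X''] [Nonempty X'']
    [Fintype Y] [Nonempty Y] [Fintype Y'] [Nonempty Y'] [Fintype Y''] [Nonempty Y'']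
    (μ : Matrix Y X ℝ) (μ' : Matrix Y' X' ℝ) (μ'' : Matrix Y'' X'' ℝ)
    (αX : Matrix X' X ℝ) (αY : Matrix Y' Y ℝ)
    (βX : Matrix X'' X' ℝ) (βY : Matrix Y'' Y' ℝ)
    (hμ : IsColStoch μ) (hμ' : IsColStoch μ') (hμ'' : IsColStoch μ'')
    (hαX : IsAbsMatrix αX) (hαY : IsAbsMatrix αY)
    (hβX : IsAbsMatrix βX) (hβY : IsAbsMatrix βY) :
    supJSD (βY * αY * μ) (μ'' * βX * αX)
      ≤ supJSD (αY * μ) (μ' * αX) + supJSD (βY * μ') (μ'' * βX) :=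
  ic_triangle_general μ μ' μ'' αX αY βX βY hμ hμ' hμ'' hαX hαY hβX hβY
end
end

section
/- The interventional information loss dominates the interventional consistency error: E_IIL ≥ E_IC, i.e., D(μ, α_Y⁺·μ'·α_X) ≥ D(α_Y·μ, μ'·α_X). -/
open Finset Matrix

noncomputable section

lemma log_sum_ineq {ι : Type*} (s : Finset ι) (a b : ι → ℝ)
    (ha : ∀ i ∈ s, 0 ≤ a i) (hb : ∀ i ∈ s, 0 ≤ b i)
    (hab : ∀ i ∈ s, b i = 0 → a i = 0) :
    (∑ i ∈ s, a i) * Real.log ((∑ i ∈ s, a i) / (∑ i ∈ s, b i))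
      ≤ ∑ i ∈ s, a i * Real.log (a i / b i) := by
  classical
  set t := s.filter (fun i => 0 < b i) with ht
  have hat : ∀ i ∈ s, i ∉ t → a i = 0 := by
    intro i hi hit
    apply hab i hi
    by_contra h
    exact hit (Finset.mem_filter.2 ⟨hi, lt_of_le_of_ne (hb i hi) (Ne.symm h)⟩)
  have hA : ∑ i ∈ s, a i = ∑ i ∈ t, a i :=
    (Finset.sum_subset (Finset.filter_subset _ _) (fun i hi hit => hat i hi hit)).symm
  have hB : ∑ i ∈ s, b i = ∑ i ∈ t, b i := by
    refine (Finset.sum_subset (Finset.filter_subset _ _) (fun i hi hit => ?_)).symm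
    by_contra h
    exact hit (Finset.mem_filter.2 ⟨hi, lt_of_le_of_ne (hb i hi) (Ne.symm h)⟩)
  have hR : ∑ i ∈ s, a i * Real.log (a i / b i)
      = ∑ i ∈ t, a i * Real.log (a i / b i) := by
    refine (Finset.sum_subset (Finset.filter_subset _ _) (fun i hi hit => ?_)).symm
    rw [hat i hi hit, zero_mul]
  rw [hA, hB, hR]
  rcases Finset.eq_empty_or_nonempty t with hte | hte
  · simp [hte]
  have hbpos : ∀ i ∈ t, 0 < b i := fun i hi => (Finset.mem_filter.1 hi).2
  have hBpos : 0 < ∑ i ∈ t, b i := Finset.sum_pos hbpos hte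
  have hcm := Real.convexOn_mul_log.map_centerMass_le (t := t) (w := b)
    (p := fun i => a i / b i) (fun i hi => (hbpos i hi).le) hBpos
    (fun i hi => Set.mem_Ici.2 (div_nonneg (ha i (Finset.filter_subset _ _ hi)) (hbpos i hi).le))
  simp only [Finset.centerMass, smul_eq_mul, Function.comp] at hcm
  have h1 : ∑ i ∈ t, b i * (a i / b i) = ∑ i ∈ t, a i :=
    Finset.sum_congr rfl fun i hi => mul_div_cancel₀ _ (hbpos i hi).ne'
  have h2 : ∑ i ∈ t, b i * (a i / b i * Real.log (a i / b i))
      = ∑ i ∈ t, a i * Real.log (a i / b i) := by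
    refine Finset.sum_congr rfl fun i hi => ?_
    rw [← mul_assoc, mul_div_cancel₀ _ (hbpos i hi).ne']
  rw [h1, h2, inv_mul_eq_div] at hcm
  calc (∑ i ∈ t, a i) * Real.log ((∑ i ∈ t, a i) / ∑ i ∈ t, b i)
      = (∑ i ∈ t, b i) * ((∑ i ∈ t, a i) / (∑ i ∈ t, b i) *
          Real.log ((∑ i ∈ t, a i) / ∑ i ∈ t, b i)) := by
        rw [← mul_assoc, mul_div_cancel₀ _ hBpos.ne']
    _ ≤ (∑ i ∈ t, b i) * ((∑ i ∈ t, b i)⁻¹ * ∑ i ∈ t, a i * Real.log (a i / b i)) :=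
        mul_le_mul_of_nonneg_left hcm hBpos.le
    _ = ∑ i ∈ t, a i * Real.log (a i / b i) := by
        rw [← mul_assoc, mul_inv_cancel₀ hBpos.ne', one_mul]

lemma KL_eq {X : Type*} [Fintype X] (p q : X → ℝ) :
    KL p q = ∑ x, p x * Real.log (p x / q x) := by
  unfold KL
  refine Finset.sum_congr rfl fun x _ => ?_
  split <;> simp [*]

lemma KL_comp {Y Y' : Type*} [Fintype Y] [Fintype Y'] [DecidableEq Y']
    (f : Y → Y') (p m : Y → ℝ) (hp : ∀ y, 0 ≤ p y) (hm : ∀ y, 0 ≤ m y)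
    (hpm : ∀ y, m y = 0 → p y = 0) :
    KL (fun y' => ∑ y, if f y = y' then p y else 0)
       (fun y' => ∑ y, if f y = y' then m y else 0) ≤ KL p m := by
  rw [KL_eq, KL_eq]
  have hfib : ∀ (g : Y → ℝ) (y' : Y'),
      (∑ y, if f y = y' then g y else 0) = ∑ y ∈ univ.filter (fun y => f y = y'), g y := by
    intro g y'; rw [Finset.sum_filter]
  have hsum : ∑ y, p y * Real.log (p y / m y)
      = ∑ y' : Y', ∑ y ∈ univ.filter (fun y => f y = y'), p y * Real.log (p y / m y) := by
    rw [Finset.sum_fiberwise_eq_sum_filter]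
    simp
  rw [hsum]
  refine Finset.sum_le_sum fun y' _ => ?_
  simp only [hfib]
  exact log_sum_ineq _ p m (fun y _ => hp y) (fun y _ => hm y) (fun y _ => hpm y)

lemma JSD_comp {Y Y' : Type*} [Fintype Y] [Fintype Y'] [DecidableEq Y']
    (f : Y → Y') (p q : Y → ℝ) (hp : ∀ y, 0 ≤ p y) (hq : ∀ y, 0 ≤ q y) :
    JSD (fun y' => ∑ y, if f y = y' then p y else 0)
        (fun y' => ∑ y, if f y = y' then q y else 0) ≤ JSD p q := by
  unfold JSD
  apply Real.sqrt_le_sqrt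
  have hmid : (fun y' => ((∑ y, if f y = y' then p y else 0)
        + (∑ y, if f y = y' then q y else 0)) / 2)
      = fun y' => ∑ y, if f y = y' then (p y + q y) / 2 else 0 := by
    funext y'
    rw [← Finset.sum_add_distrib, Finset.sum_div]
    refine Finset.sum_congr rfl fun y _ => ?_
    split <;> simp
  rw [hmid]
  have hm : ∀ y, 0 ≤ (p y + q y) / 2 := fun y => by have := hp y; have := hq y; linarith
  have h1 := KL_comp f p (fun y => (p y + q y) / 2) hp hm
    (fun y h => le_antisymm (by nlinarith [hp y, hq y]) (hp y))
  have h2 := KL_comp f q (fun y => (p y + q y) / 2) hq hm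
    (fun y h => le_antisymm (by nlinarith [hp y, hq y]) (hq y))
  linarith

theorem iil_ge_ic {X X' Y Y' : Type*}
    [Fintype X] [Nonempty X] [Fintype X'] [Nonempty X']
    [Fintype Y] [Nonempty Y] [Fintype Y'] [Nonempty Y']
    [DecidableEq X'] [DecidableEq Y']
    (μ : Matrix Y X ℝ) (μ' : Matrix Y' X' ℝ)
    (αX : Matrix X' X ℝ) (αY : Matrix Y' Y ℝ)
    (hμ : IsColStoch μ) (hμ' : IsColStoch μ')
    (hαX : IsAbsMatrix αX) (hαY : IsAbsMatrix αY) :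
    supJSD μ (pinv αY * μ' * αX) ≥ supJSD (αY * μ) (μ' * αX) := by
  classical
  obtain ⟨hα01, hαcol, hαrow⟩ := hαY
  choose f hf1 hf2 using hαcol
  have hform : ∀ y' y, αY y' y = if f y = y' then 1 else 0 := by
    intro y' y
    by_cases h : f y = y'
    · rw [if_pos h, ← h]; exact hf1 y
    · rw [if_neg h]
      rcases hα01 y' y with h0 | h1
      · exact h0
      · exact absurd (hf2 y y' h1).symm h
  set d : Y' → ℝ := fun y' => ∑ y, if f y = y' then (1:ℝ) else 0 with hd
  have hdiag : αY * αYᵀ = Matrix.diagonal d := by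
    ext y1 y2
    rw [Matrix.mul_apply]
    by_cases h : y1 = y2
    · subst h
      rw [Matrix.diagonal_apply_eq, hd]
      refine Finset.sum_congr rfl fun y _ => ?_
      rw [Matrix.transpose_apply, hform]
      split <;> simp
    · rw [Matrix.diagonal_apply_ne _ h]
      apply Finset.sum_eq_zero; intro y _
      rw [Matrix.transpose_apply, hform, hform]
      by_cases h1 : f y = y1
      · by_cases h2 : f y = y2
        · exact absurd (h1.symm.trans h2) h
        · simp [h2]
      · simp [h1]
  have hdpos : ∀ y', 0 < d y' := by
    intro y'
    obtain ⟨y, hy⟩ := hαrow y'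
    have hfy : f y = y' := (hf2 y y' hy).symm
    refine Finset.sum_pos' (fun z _ => by split <;> norm_num)
      ⟨y, Finset.mem_univ y, by simp [hfy]⟩
  have hinv : (αY * αYᵀ)⁻¹ = Matrix.diagonal (fun y' => (d y')⁻¹) := by
    apply Matrix.inv_eq_right_inv
    rw [hdiag, Matrix.diagonal_mul_diagonal]
    have : (fun y' => d y' * (d y')⁻¹) = fun _ => (1:ℝ) :=
      funext fun y' => mul_inv_cancel₀ (hdpos y').ne'
    rw [this, Matrix.diagonal_one]
  have hpinv_apply : ∀ y y', pinv αY y y' = αY y' y * (d y')⁻¹ := by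
    intro y y'
    rw [pinv, hinv, Matrix.mul_diagonal, Matrix.transpose_apply]
  have hpinv_nonneg : ∀ y y', 0 ≤ pinv αY y y' := by
    intro y y'
    rw [hpinv_apply, hform]
    have := (hdpos y').le
    split <;> simp [inv_nonneg.2 this]
  have hid : αY * pinv αY = 1 := by
    rw [pinv, ← Matrix.mul_assoc, hinv, hdiag, Matrix.diagonal_mul_diagonal]
    have : (fun y' => d y' * (d y')⁻¹) = fun _ => (1:ℝ) :=
      funext fun y' => mul_inv_cancel₀ (hdpos y').ne'
    rw [this, Matrix.diagonal_one]
  set N := pinv αY * μ' * αX with hN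
  have hNnn : ∀ y x, 0 ≤ N y x := by
    intro y x
    rw [hN, Matrix.mul_apply]
    refine Finset.sum_nonneg fun x' _ => mul_nonneg ?_ ?_
    · rw [Matrix.mul_apply]
      exact Finset.sum_nonneg fun y' _ =>
        mul_nonneg (hpinv_nonneg y y') (hμ'.1 y' x')
    · rcases hαX.1 x' x with h | h <;> simp [h]
  have hkey : αY * N = μ' * αX := by
    rw [hN, ← Matrix.mul_assoc, ← Matrix.mul_assoc, hid, Matrix.one_mul]
  rw [ge_iff_le, ← hkey]
  unfold supJSD
  apply Finset.sup'_le
  intro x _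
  have e1 : (fun y' => (αY * μ) y' x) = fun y' => ∑ y, if f y = y' then μ y x else 0 := by
    funext y'
    rw [Matrix.mul_apply]
    refine Finset.sum_congr rfl fun y _ => ?_
    rw [hform]; split <;> simp
  have e2 : (fun y' => (αY * N) y' x) = fun y' => ∑ y, if f y = y' then N y x else 0 := by
    funext y'
    rw [Matrix.mul_apply]
    refine Finset.sum_congr rfl fun y _ => ?_
    rw [hform]; split <;> simp
  rw [e1, e2]
  calc JSD (fun y' => ∑ y, if f y = y' then μ y x else 0)
        (fun y' => ∑ y, if f y = y' then N y x else 0)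
      ≤ JSD (fun y => μ y x) (fun y => N y x) :=
        JSD_comp f _ _ (fun y => hμ.1 y x) (fun y => hNnn y x)
    _ ≤ _ := Finset.le_sup' (fun x => JSD (fun y => μ y x) (fun y => N y x)) (Finset.mem_univ x)
end
end
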